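/- Let r ≥ 5 and define x_r = r and x_i = ⌊(i+1)(x_{i+1} − 1)/i⌋ for i = r−1 down to 1. If x_{i+1} − 1 is not divisible by i for every i ∈ {2, …, r−2}, then the set {n ∈ ℕ : sr(n) = r} equals {x_1 − 1, x_1} and has exactly two elements. -/
import Mathlib


/-- The next value in the strange-root process: the least integer `z` with
`(i+1)*z > i*(y+1)`. -/
def srStep (i y : ℕ) : ℕ := i * (y + 1) / (i + 1) + 1

/-- `srY n i` is the second coordinate `y_i` of the `i`-th pair of the
strange-root process started at `⟨1, n⟩` (indices start at 1). -/
def srY (n : ℕ) : ℕ → ℕ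
  | 0 => n
  | 1 => n
  | (i+2) => srStep (i+1) (srY n (i+1))

/-- The strange root of `n`: the first index `r ≥ 1` with `y_r ≤ r`. -/
noncomputable def sr (n : ℕ) : ℕ := sInf {r | 1 ≤ r ∧ srY n r ≤ r}

lemma srStep_mono (i : ℕ) {a b : ℕ} (h : a ≤ b) : srStep i a ≤ srStep i b := by
  unfold srStep
  have := Nat.div_le_div_right (c := i+1) (Nat.mul_le_mul_left i (by omega : a+1 ≤ b+1))
  omega

lemma mod_w {i : ℕ} (w : ℕ) (hi : 1 ≤ i) : (i+1)*w % i = w % i := by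
  have h : (i+1)*w = w + i*w := by ring
  rw [h, Nat.add_mul_mod_self_left]

lemma step_eq {i w : ℕ} (hi : 1 ≤ i) : srStep i ((i+1)*w/i) = w + 1 := by
  set q := (i+1)*w/i with hq
  have h1 : i * q + (i+1)*w % i = (i+1)*w := Nat.div_add_mod _ _
  have h2 : (i+1)*w % i < i := Nat.mod_lt _ hi
  generalize (i+1)*w % i = s at h1 h2
  unfold srStep
  have h3 : i * (q+1) / (i+1) = w := by
    apply Nat.div_eq_of_lt_le <;> linarith
  omega

lemma step_gt {i w : ℕ} (hi : 1 ≤ i) : w + 2 ≤ srStep i ((i+1)*w/i + 1) := by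
  set q := (i+1)*w/i with hq
  have h1 : i * q + (i+1)*w % i = (i+1)*w := Nat.div_add_mod _ _
  have h2 : (i+1)*w % i < i := Nat.mod_lt _ hi
  generalize (i+1)*w % i = s at h1 h2
  unfold srStep
  have h3 : w + 1 ≤ i * (q+1+1) / (i+1) := by
    rw [Nat.le_div_iff_mul_le (by omega)]; linarith
  omega

lemma step_lt {i w : ℕ} (hi : 1 ≤ i) (hw : 1 ≤ w) (hd : ¬ i ∣ w) :
    srStep i ((i+1)*w/i - 1) ≤ w := by
  set q := (i+1)*w/i with hq
  have hq1 : 1 ≤ q := by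
    rw [hq, Nat.le_div_iff_mul_le (by omega)]; nlinarith
  have h1 : i * q + (i+1)*w % i = (i+1)*w := Nat.div_add_mod _ _
  have h2 : (i+1)*w % i < i := Nat.mod_lt _ hi
  have hs1 : 1 ≤ (i+1)*w % i := by
    rw [mod_w w hi]
    rcases Nat.eq_zero_or_pos (w % i) with h | h
    · exact absurd (Nat.dvd_of_mod_eq_zero h) hd
    · omega
  generalize (i+1)*w % i = s at h1 h2 hs1
  unfold srStep
  have he : q - 1 + 1 = q := by omega
  rw [he]
  have h3 : i * q / (i+1) < w := by
    rw [Nat.div_lt_iff_lt_mul (by omega)]; linarith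
  omega

lemma step_eq' {i w : ℕ} (hi : 1 ≤ i) (hw : 1 ≤ w) (hd : i ∣ w) :
    srStep i ((i+1)*w/i - 1) = w + 1 := by
  set q := (i+1)*w/i with hq
  have hq1 : 1 ≤ q := by
    rw [hq, Nat.le_div_iff_mul_le (by omega)]; nlinarith
  have h1 : i * q + (i+1)*w % i = (i+1)*w := Nat.div_add_mod _ _
  have hs : (i+1)*w % i = 0 := by
    rw [mod_w w hi]; exact Nat.mod_eq_zero_of_dvd hd
  have h2 : i * q = (i+1) * w := by omega
  unfold srStep
  have he : q - 1 + 1 = q := by omega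
  rw [he, h2, Nat.mul_div_cancel_left w (by omega : 0 < i + 1)]

lemma srY_succ (n i : ℕ) (hi : 1 ≤ i) : srY n (i+1) = srStep i (srY n i) := by
  match i, hi with
  | (j+1), _ => rfl

/-- If `x_r = r`, `x_i = ⌊(i+1)(x_(i+1) - 1)/i⌋`, and `i ∤ x_(i+1) - 1` for
all `2 ≤ i ≤ r - 2`, then exactly two positive integers, `x_1 - 1` and
`x_1`, have strange root `r`. -/
theorem unique_strange_root_characterization (r : ℕ) (hr : 5 ≤ r)
    (x : ℕ → ℕ) (hxr : x r = r)
    (hx : ∀ i, 1 ≤ i → i < r → x i = (i + 1) * (x (i + 1) - 1) / i)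
    (hdvd : ∀ i, 2 ≤ i → i ≤ r - 2 → ¬ i ∣ x (i + 1) - 1) :
    {n : ℕ | 0 < n ∧ sr n = r} = {x 1 - 1, x 1} ∧ x 1 - 1 ≠ x 1 := by
  have hxr1 : x (r-1) = r := by
    have h := hx (r-1) (by omega) (by omega)
    rw [show r - 1 + 1 = r from by omega, hxr] at h
    rw [h]
    exact Nat.mul_div_cancel r (by omega)
  have growth : ∀ k, ∀ i, 1 ≤ i → i + k = r - 1 → i + 1 ≤ x i := by
    intro k
    induction k with
    | zero =>
      intro i h1 h2
      have hi : i = r - 1 := by omega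
      subst hi
      rw [hxr1]; omega
    | succ k ih =>
      intro i h1 h2
      have hnext : i + 2 ≤ x (i+1) := ih (i+1) (by omega) (by omega)
      have h := hx i h1 (by omega)
      rw [h, Nat.le_div_iff_mul_le (by omega : 0 < i)]
      have hle : i ≤ x (i+1) - 1 := by omega
      exact Nat.mul_le_mul_left _ hle
  have growth' : ∀ i, 1 ≤ i → i < r → i + 1 ≤ x i := by
    intro i h1 h2
    exact growth (r-1-i) i h1 (by omega)
  have hx2 : 3 ≤ x 2 := growth' 2 (by omega) (by omega)
  have hx1 : x 1 = 2 * (x 2 - 1) := by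
    have h := hx 1 (le_refl 1) (by omega)
    rw [Nat.div_one] at h
    norm_num at h
    omega
  -- membership direction
  have mem_sr : ∀ n, (n = x 1 - 1 ∨ n = x 1) → 0 < n ∧ sr n = r := by
    intro n hn
    have hn1 : 1 < n := by omega
    have hy2 : srY n 2 = x 2 := by
      have h0 : srY n 2 = srStep 1 n := rfl
      have e1 : (1+1)*(x 2 - 1)/1 = x 1 := by rw [Nat.div_one]; omega
      rcases hn with h | h
      · have hs := step_eq' (i := 1) (w := x 2 - 1) (by norm_num) (by omega) (one_dvd _)
        rw [e1] at hs
        rw [h0, h, hs]; omega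
      · have hs := step_eq (i := 1) (w := x 2 - 1) (by norm_num)
        rw [e1] at hs
        rw [h0, h, hs]; omega
    have hchain : ∀ i, 2 ≤ i → i ≤ r - 1 → srY n i = x i := by
      intro i hi2
      induction i, hi2 using Nat.le_induction with
      | base => intro _; exact hy2
      | succ i hi ih =>
        intro hile
        have hyi := ih (by omega)
        rw [srY_succ n i (by omega), hyi, hx i (by omega) (by omega)]
        rw [step_eq (i := i) (w := x (i+1) - 1) (by omega)]
        have := growth' (i+1) (by omega) (by omega)
        omega
    have hyr1 : srY n (r-1) = x (r-1) := hchain (r-1) (by omega) (le_refl _)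
    have hyr : srY n r = r := by
      have hstep_r : srY n r = srStep (r-1) (srY n (r-1)) := by
        have e : r - 1 + 1 = r := by omega
        conv_lhs => rw [← e]
        rw [srY_succ n (r-1) (by omega)]
      rw [hstep_r, hyr1, hxr1]
      have h := step_eq (i := r-1) (w := r-1) (by omega)
      rw [Nat.mul_div_cancel _ (by omega : 0 < r-1)] at h
      rw [show r-1+1 = r from by omega] at h
      omega
    have hlt : ∀ k, 1 ≤ k → k < r → k < srY n k := by
      intro k h1 h2
      rcases eq_or_lt_of_le h1 with h | h
      · have : k = 1 := h.symm
        subst this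
        exact hn1
      · have h3 := hchain k (by omega) (by omega)
        have h4 := growth' k (by omega) h2
        omega
    refine ⟨by omega, ?_⟩
    unfold sr
    have hrS : r ∈ {k | 1 ≤ k ∧ srY n k ≤ k} := ⟨by omega, by rw [hyr]⟩
    apply le_antisymm
    · exact Nat.sInf_le hrS
    · apply le_csInf ⟨r, hrS⟩
      intro k hk
      obtain ⟨hk1, hk2⟩ := hk
      by_contra hc
      push_neg at hc
      have := hlt k hk1 (by omega)
      omega
  -- converse direction
  have sr_mem : ∀ n, 0 < n → sr n = r → n = x 1 - 1 ∨ n = x 1 := by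
    intro n hn hsr
    unfold sr at hsr
    have hne : {k | 1 ≤ k ∧ srY n k ≤ k}.Nonempty := by
      by_contra h'
      rw [Set.not_nonempty_iff_eq_empty] at h'
      rw [h', Nat.sInf_empty] at hsr; omega
    have hrmem : r ∈ {k | 1 ≤ k ∧ srY n k ≤ k} := hsr ▸ Nat.sInf_mem hne
    have hyr : srY n r ≤ r := hrmem.2
    have hlt : ∀ k, 1 ≤ k → k < r → k < srY n k := by
      intro k h1 h2
      have hnot : k ∉ {m | 1 ≤ m ∧ srY n m ≤ m} :=
        Nat.notMem_of_lt_sInf (by omega)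
      simp only [Set.mem_setOf_eq] at hnot
      omega
    have hstep_r : srY n r = srStep (r-1) (srY n (r-1)) := by
      have e : r - 1 + 1 = r := by omega
      conv_lhs => rw [← e]
      rw [srY_succ n (r-1) (by omega)]
    have hyr1 : srY n (r-1) = x (r-1) := by
      have hge : r ≤ srY n (r-1) := by have := hlt (r-1) (by omega) (by omega); omega
      have hle : srY n (r-1) ≤ r := by
        by_contra hc
        push_neg at hc
        have h1 : srStep (r-1) (r+1) ≤ srStep (r-1) (srY n (r-1)) :=
          srStep_mono _ (by omega)
        have h2 := step_gt (i := r-1) (w := r-1) (by omega)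
        rw [Nat.mul_div_cancel _ (by omega : 0 < r-1)] at h2
        rw [show r-1+1+1 = r+1 from by omega] at h2
        rw [← hstep_r] at h1
        omega
      rw [hxr1]; omega
    have hchain : ∀ k, ∀ i, 2 ≤ i → i + k = r - 1 → srY n i = x i := by
      intro k
      induction k with
      | zero =>
        intro i h2 hik
        have hi : i = r - 1 := by omega
        subst hi
        exact hyr1
      | succ k ih =>
        intro i h2 hik
        have hnext : srY n (i+1) = x (i+1) := ih (i+1) (by omega) (by omega)
        have hstep : srStep i (srY n i) = x (i+1) := by
          rw [← srY_succ n i (by omega), hnext]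
        have hgi : i < srY n i := hlt i (by omega) (by omega)
        have hgx : i + 2 ≤ x (i+1) := growth' (i+1) (by omega) (by omega)
        have hxi := hx i (by omega) (by omega)
        have hub : srY n i ≤ x i := by
          by_contra hc
          push_neg at hc
          have h1 : srStep i (x i + 1) ≤ srStep i (srY n i) := srStep_mono _ (by omega)
          have h2' := step_gt (i := i) (w := x (i+1) - 1) (by omega)
          rw [← hxi] at h2'
          omega
        have hlb : x i ≤ srY n i := by
          by_contra hc
          push_neg at hc
          have h1 : srStep i (srY n i) ≤ srStep i (x i - 1) := srStep_mono _ (by omega)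
          have h2' := step_lt (i := i) (w := x (i+1) - 1) (by omega) (by omega)
            (hdvd i (by omega) (by omega))
          rw [← hxi] at h2'
          omega
        omega
    have hy2 : srY n 2 = x 2 := hchain (r-3) 2 (by omega) (by omega)
    have hs2 : srStep 1 n = x 2 := by rw [← hy2]; rfl
    unfold srStep at hs2
    rw [one_mul] at hs2
    have hd := Nat.div_add_mod (n+1) 2
    have hm : (n+1) % 2 < 2 := Nat.mod_lt _ (by omega)
    omega
  constructor
  · ext n
    simp only [Set.mem_setOf_eq, Set.mem_insert_iff, Set.mem_singleton_iff]
    constructor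
    · rintro ⟨h1, h2⟩
      exact sr_mem n h1 h2
    · intro h
      exact mem_sr n h
  · omega
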